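/- arXiv:1501.01022 — 2 statements merged into one kernel-verified Lean document; each statement's English description precedes it below -/
import Mathlib

section
/- If j : ZFSet → ZFSet satisfies the pair-tagging recursion, then j is injective. -/
/-- A function `j : ZFSet → ZFSet` satisfies the pair-tagging recursion if
`j y = { j x : x ∈ y } ∪ {{∅, y}}`, i.e. `z ∈ j y ↔ (∃ x ∈ y, z = j x) ∨ z = {∅, y}`. -/
def PairTagging (j : ZFSet → ZFSet) : Prop :=
  ∀ y z : ZFSet, z ∈ j y ↔ ((∃ x ∈ y, z = j x) ∨ z = ({∅, y} : ZFSet))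

/-!
If `j a = j b`, the tag `{∅, b}` of `b` lies in `j a`, so either it is the tag of `a` (and then
`a = b`) or it is `j x` for some `x ∈ a`. In the latter case the tag `{∅, x}` of `x` lies in
`j x = {∅, b}`; being nonempty it equals `b`. Symmetrically `a = {∅, y}` with `y ∈ b`, so
`x ∈ {∅, y}` and `y ∈ {∅, x}`, which forces `x = y` and hence `a = b`. No induction on `∈` is needed.
-/

namespace ZFSet

theorem eq_of_mem_pair_of_mem_pair {c x y : ZFSet} (hx : x ∈ ({c, y} : ZFSet))
    (hy : y ∈ ({c, x} : ZFSet)) : x = y := by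
  rcases mem_pair.1 hx with rfl | rfl
  · rcases mem_pair.1 hy with rfl | rfl <;> rfl
  · rfl

theorem pair_right_injective (c : ZFSet) : Function.Injective fun a : ZFSet => ({c, a} : ZFSet) :=
  fun a b (h : ({c, a} : ZFSet) = {c, b}) =>
    eq_of_mem_pair_of_mem_pair (h ▸ mem_pair.2 (Or.inr rfl)) (h ▸ mem_pair.2 (Or.inr rfl))

end ZFSet

namespace PairTagging

open ZFSet

variable {j : ZFSet → ZFSet}

theorem pair_mem_apply (hj : PairTagging j) (y : ZFSet) : ({∅, y} : ZFSet) ∈ j y :=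
  (hj y _).2 (Or.inr rfl)

theorem eq_pair_of_apply_eq_pair (hj : PairTagging j) {x b : ZFSet}
    (h : j x = ({∅, b} : ZFSet)) : b = ({∅, x} : ZFSet) := by
  have hx := hj.pair_mem_apply x
  rw [h, mem_pair] at hx
  rcases hx with hempty | hb
  · exact absurd (hempty ▸ mem_pair.2 (Or.inl rfl)) (notMem_empty _)
  · exact hb.symm

theorem eq_or_exists_eq_pair_of_apply_eq (hj : PairTagging j) {a b : ZFSet} (hab : j a = j b) :
    a = b ∨ ∃ x ∈ a, b = ({∅, x} : ZFSet) := by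
  rcases (hj a _).1 (hab ▸ hj.pair_mem_apply b) with ⟨x, hxa, hx⟩ | h
  · exact Or.inr ⟨x, hxa, hj.eq_pair_of_apply_eq_pair hx.symm⟩
  · exact Or.inl (pair_right_injective ∅ h).symm

end PairTagging

/-- Any function satisfying the pair-tagging recursion is injective. -/
theorem pairTagging_injective (j : ZFSet → ZFSet) (hj : PairTagging j) :
    Function.Injective j := by
  intro a b hab
  rcases hj.eq_or_exists_eq_pair_of_apply_eq hab with hab' | ⟨x, hxa, rfl⟩
  · exact hab'
  rcases hj.eq_or_exists_eq_pair_of_apply_eq hab.symm with hba | ⟨y, hyb, rfl⟩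
  · exact hba.symm
  rw [ZFSet.eq_of_mem_pair_of_mem_pair hxa hyb]
end

section
/- If j : ZFSet → ZFSet satisfies the pair-tagging recursion, then j is an embedding of (ZFSet, ∈) into itself: for all x, y : ZFSet, x ∈ y if and only if j(x) ∈ j(y). -/
/-! The tag `{∅, y}` makes every `j y` nonempty, so `∅` is never of the form `j x`; since
`∅` lies in every tag, no tag is of that form either. Hence the tag of `y` is the only tag in
`j y`, which makes `j` injective, and then membership `j x ∈ j y` can only come from `x ∈ y`. -/

theorem ZFSet.pair_right_injective_s4 (a : ZFSet) {x y : ZFSet} (h : ({a, x} : ZFSet) = {a, y}) :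
    x = y := by
  have hx : x ∈ ({a, y} : ZFSet) := h ▸ ZFSet.mem_pair.2 (Or.inr rfl)
  have hy : y ∈ ({a, x} : ZFSet) := h ▸ ZFSet.mem_pair.2 (Or.inr rfl)
  rcases ZFSet.mem_pair.1 hx with rfl | rfl
  · rcases ZFSet.mem_pair.1 hy with rfl | rfl <;> rfl
  · rfl

namespace PairTagging

variable {j : ZFSet → ZFSet} (hj : PairTagging j)
include hj

theorem pair_mem (y : ZFSet) : ({∅, y} : ZFSet) ∈ j y :=
  (hj y _).2 (Or.inr rfl)

theorem map_mem_map {x y : ZFSet} (h : x ∈ y) : j x ∈ j y :=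
  (hj y _).2 (Or.inl ⟨x, h, rfl⟩)

theorem map_ne_empty (x : ZFSet) : j x ≠ ∅ := fun h =>
  ZFSet.notMem_empty _ (h ▸ hj.pair_mem x)

theorem empty_notMem (x : ZFSet) : (∅ : ZFSet) ∉ j x := by
  intro h
  rcases (hj x ∅).1 h with ⟨w, -, hw⟩ | hw
  · exact hj.map_ne_empty w hw.symm
  · exact ZFSet.notMem_empty _ (hw ▸ ZFSet.mem_pair.2 (Or.inl rfl))

theorem map_ne_pair (x y : ZFSet) : j x ≠ ({∅, y} : ZFSet) := fun h =>
  hj.empty_notMem x (h ▸ ZFSet.mem_pair.2 (Or.inl rfl))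

theorem injective : Function.Injective j := by
  intro x y h
  rcases (hj y _).1 (h ▸ hj.pair_mem x) with ⟨w, -, hw⟩ | hw
  · exact absurd hw.symm (hj.map_ne_pair w x)
  · exact ZFSet.pair_right_injective_s4 ∅ hw

end PairTagging

/-- Any function satisfying the pair-tagging recursion is an embedding of `(ZFSet, ∈)`
into itself: `x ∈ y ↔ j x ∈ j y`. -/
theorem pairTagging_embedding (j : ZFSet → ZFSet) (hj : PairTagging j) :
    ∀ x y : ZFSet, x ∈ y ↔ j x ∈ j y := by
  intro x y
  refine ⟨hj.map_mem_map, fun h => ?_⟩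
  rcases (hj y _).1 h with ⟨w, hw, hxw⟩ | hxy
  · exact hj.injective hxw ▸ hw
  · exact absurd hxy (hj.map_ne_pair x y)
end
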